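/- arXiv:2207.11485 — 5 statements merged into one kernel-verified Lean document; each statement's English description precedes it below -/
import Mathlib

section
/- Let r ≥ 1 and c be integers with 0 ≤ c ≤ r, let k_1, ..., k_c be positive integers, and let x be an indeterminate (formal power series over ℚ). Then ∑_{h≥0} (∑_{I ⊆ {1,...,c}} (−1)^{|I|} C(h − k_I + r − 1, r − 1)) x^h = (∏_{i=1}^c (1 − x^{k_i})) / (1 − x)^r as formal power series, where k_I = ∑_{i∈I} k_i and C(n, r−1) = 0 for n < r−1. -/
open Finset PowerSeries

/-- Binomial coefficient with integer top, zero for negative top. -/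
def ichoose (n : ℤ) (m : ℕ) : ℤ := if n < 0 then 0 else ((n.toNat).choose m : ℤ)

/-- Generating-function form of the Koszul computation of the Hilbert function of a
complete intersection of multidegree `(k 1, ..., k c)` in `ℙ^{r-1}`. -/
theorem stmt_5 (r c : ℕ) (hr : 1 ≤ r) (hc : c ≤ r) (k : Fin c → ℕ) (hk : ∀ i, 0 < k i) :
    (PowerSeries.mk (fun h : ℕ =>
        ((∑ I ∈ (Finset.univ : Finset (Fin c)).powerset,
            (-1 : ℤ) ^ I.card * ichoose ((h : ℤ) - (∑ i ∈ I, (k i : ℤ)) + r - 1) (r - 1) : ℤ) : ℚ))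
      : PowerSeries ℚ)
    = (∏ i, (1 - (PowerSeries.X : PowerSeries ℚ) ^ (k i)))
        * ((1 - (PowerSeries.X : PowerSeries ℚ)) ^ r)⁻¹ := by
  -- the inverse is `invOneSubPow`
  have hinv : ((1 - (PowerSeries.X : PowerSeries ℚ)) ^ r)⁻¹
      = (invOneSubPow ℚ r).val := by
    rw [eq_comm, PowerSeries.eq_inv_iff_mul_eq_one]
    · rw [← invOneSubPow_inv_eq_one_sub_pow]
      exact (invOneSubPow ℚ r).val_inv
    · simp
  rw [hinv, invOneSubPow_val_eq_mk_sub_one_add_choose_of_pos ℚ r hr]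
  -- expand the product as a sum over subsets
  have hprod : (∏ i, (1 - (PowerSeries.X : PowerSeries ℚ) ^ (k i)))
      = ∑ I ∈ (Finset.univ : Finset (Fin c)).powerset,
          ((-1 : ℚ) ^ I.card) • ((PowerSeries.X : PowerSeries ℚ) ^ (∑ i ∈ I, k i)) := by
    have : ∀ i ∈ (Finset.univ : Finset (Fin c)),
        (1 - (PowerSeries.X : PowerSeries ℚ) ^ (k i))
          = (-(PowerSeries.X : PowerSeries ℚ) ^ (k i)) + 1 := by intro i _; ring
    rw [Finset.prod_congr rfl this, Finset.prod_add]
    refine Finset.sum_congr rfl fun I _ => ?_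
    rw [Finset.prod_const_one, mul_one]
    have h1 : ∀ i ∈ I, -(PowerSeries.X : PowerSeries ℚ) ^ (k i)
        = (-1) * (PowerSeries.X : PowerSeries ℚ) ^ (k i) := fun i _ => by ring
    rw [Finset.prod_congr rfl h1, Finset.prod_mul_distrib, Finset.prod_const,
      Finset.prod_pow_eq_pow_sum, PowerSeries.smul_eq_C_mul]
    simp
  rw [hprod, Finset.sum_mul]
  ext h
  rw [PowerSeries.coeff_mk, map_sum]
  push_cast
  refine Finset.sum_congr rfl fun I _ => ?_
  rw [smul_mul_assoc, LinearMap.map_smul, smul_eq_mul, coeff_X_pow_mul',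
    PowerSeries.coeff_mk]
  congr 1
  set m := ∑ i ∈ I, k i with hm
  have hsum : (∑ i ∈ I, (k i : ℤ)) = (m : ℤ) := by push_cast [hm]; ring
  rw [hsum]
  by_cases hmh : m ≤ h
  · rw [if_pos hmh]
    have hnn : (0 : ℤ) ≤ (h : ℤ) - m + r - 1 := by omega
    have : ((h : ℤ) - m + r - 1).toNat = r - 1 + (h - m) := by omega
    rw [ichoose, if_neg (not_lt.mpr hnn), this]
    push_cast
    rw [Nat.add_comm]
  · rw [if_neg hmh]
    by_cases hneg : (h : ℤ) - m + r - 1 < 0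
    · rw [ichoose, if_pos hneg]; norm_num
    · rw [ichoose, if_neg hneg]
      have hlt : ((h : ℤ) - m + r - 1).toNat < r - 1 := by omega
      rw [Nat.choose_eq_zero_of_lt hlt]; norm_num
end

section
/- Let r, c, k be integers with 1 ≤ c, k ≥ 2, and c·k > r ≥ 1. Then ∑_{i=0}^{c} (−1)^i C((c−i)·k − 1, r − 1) · ((c·k − r)·C(c, i) + k·(r − c)·C(c−1, i)) = k·(r − c)·∑_{j=0}^{c−1} (−1)^j C((c−1−j)·k − 1, r − 1)·C(c−1, j) + r·(k − 1)·∑_{i=0}^{c} (−1)^i C((c−i)·k − 1, r − 1)·C(c, i), where binomial coefficients with negative top are zero. -/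
open Finset

/-- The binomial-sum manipulation (with `h = ck - r`) at the heart of the proof of the
slope inequality for balanced relative complete intersections. -/
theorem stmt_10 (r c k : ℕ) (hc : 1 ≤ c) (hk : 2 ≤ k) (hr : 1 ≤ r) (hck : r < c * k) :
    ∑ i ∈ Finset.range (c + 1),
        (-1 : ℤ) ^ i * ichoose (((c : ℤ) - i) * k - 1) (r - 1)
          * (((c : ℤ) * k - r) * (Nat.choose c i : ℤ)
              + (k : ℤ) * ((r : ℤ) - c) * (Nat.choose (c - 1) i : ℤ))
      = (k : ℤ) * ((r : ℤ) - c)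
          * ∑ j ∈ Finset.range c,
              (-1 : ℤ) ^ j * ichoose (((c : ℤ) - 1 - j) * k - 1) (r - 1)
                * (Nat.choose (c - 1) j : ℤ)
        + (r : ℤ) * ((k : ℤ) - 1)
          * ∑ i ∈ Finset.range (c + 1),
              (-1 : ℤ) ^ i * ichoose (((c : ℤ) - i) * k - 1) (r - 1)
                * (Nat.choose c i : ℤ) := by
  obtain ⟨m, rfl⟩ : ∃ m, c = m + 1 := ⟨c - 1, (Nat.succ_pred_eq_of_pos hc).symm⟩
  set f : ℕ → ℤ := fun i =>
    (-1 : ℤ) ^ i * ichoose ((((m + 1 : ℕ) : ℤ) - i) * k - 1) (r - 1) with hf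
  set S : ℤ := ∑ i ∈ Finset.range (m + 2), f i * ((m + 1).choose i : ℤ) with hS
  set U : ℤ := ∑ i ∈ Finset.range (m + 2), f i * (m.choose i : ℤ) with hU
  set T : ℤ := ∑ j ∈ Finset.range (m + 1), f (j + 1) * (m.choose j : ℤ) with hT
  have key : S = U + T := by
    rw [hS, hU, hT,
      Finset.sum_range_succ' (fun i => f i * ((m + 1).choose i : ℤ)) (m + 1),
      Finset.sum_range_succ' (fun i => f i * (m.choose i : ℤ)) (m + 1)]
    have hterm : ∀ i ∈ Finset.range (m + 1),
        f (i + 1) * (((m + 1).choose (i + 1) : ℕ) : ℤ)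
          = f (i + 1) * (m.choose i : ℤ) + f (i + 1) * (m.choose (i + 1) : ℤ) := by
      intro i _
      rw [Nat.choose_succ_succ]
      push_cast
      ring
    rw [Finset.sum_congr rfl hterm, Finset.sum_add_distrib]
    simp [Nat.choose_zero_right]
    ring
  have h1 : ∑ i ∈ Finset.range (m + 1 + 1),
        (-1 : ℤ) ^ i * ichoose ((((m + 1 : ℕ) : ℤ) - i) * k - 1) (r - 1)
          * ((((m + 1 : ℕ) : ℤ)) * k - r) * ((m + 1).choose i : ℤ)
        = (((m + 1 : ℕ) : ℤ) * k - r) * S := by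
    rw [hS, Finset.mul_sum]
    refine Finset.sum_congr rfl fun i _ => ?_
    simp only [hf]
    ring
  have h2 : ∑ j ∈ Finset.range (m + 1),
        (-1 : ℤ) ^ j * ichoose ((((m + 1 : ℕ) : ℤ) - 1 - j) * k - 1) (r - 1)
          * ((m + 1 - 1).choose j : ℤ) = -T := by
    rw [hT, ← Finset.sum_neg_distrib]
    refine Finset.sum_congr rfl fun j _ => ?_
    simp only [hf]
    have harg : (((m + 1 : ℕ) : ℤ) - 1 - j) * k - 1
        = (((m + 1 : ℕ) : ℤ) - ((j + 1 : ℕ) : ℤ)) * k - 1 := by push_cast; ring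
    rw [harg]
    have : (m + 1 - 1 : ℕ) = m := rfl
    rw [this, pow_succ]
    push_cast
    ring
  have h3 : ∑ i ∈ Finset.range (m + 1 + 1),
        (-1 : ℤ) ^ i * ichoose ((((m + 1 : ℕ) : ℤ) - i) * k - 1) (r - 1)
          * ((m + 1 - 1).choose i : ℤ) = U := by
    rw [hU]
    refine Finset.sum_congr rfl fun i _ => ?_
    simp only [hf]
    have : (m + 1 - 1 : ℕ) = m := rfl
    rw [this]
  -- Split the LHS sum
  have hsplit : ∑ i ∈ Finset.range (m + 1 + 1),
      (-1 : ℤ) ^ i * ichoose ((((m + 1 : ℕ) : ℤ) - i) * k - 1) (r - 1)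
        * ((((m + 1 : ℕ) : ℤ)) * k - r) * ((m + 1).choose i : ℤ)
      + (k : ℤ) * ((r : ℤ) - ((m + 1 : ℕ) : ℤ)) *
        ∑ i ∈ Finset.range (m + 1 + 1),
          (-1 : ℤ) ^ i * ichoose ((((m + 1 : ℕ) : ℤ) - i) * k - 1) (r - 1)
            * ((m + 1 - 1).choose i : ℤ)
      = ∑ i ∈ Finset.range (m + 1 + 1),
        (-1 : ℤ) ^ i * ichoose ((((m + 1 : ℕ) : ℤ) - i) * k - 1) (r - 1)
          * ((((m + 1 : ℕ) : ℤ) * k - r) * ((m + 1).choose i : ℤ)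
              + (k : ℤ) * ((r : ℤ) - ((m + 1 : ℕ) : ℤ)) * ((m + 1 - 1).choose i : ℤ)) := by
    rw [Finset.mul_sum, ← Finset.sum_add_distrib]
    refine Finset.sum_congr rfl fun i _ => ?_
    ring
  rw [← hsplit, h1, h2, h3]
  push_cast
  push_cast at key
  linear_combination ((k : ℤ) * ((m : ℤ) + 1 - r)) * key
end

section
/- Let r, c, k be integers with 1 ≤ c ≤ r − 2, k ≥ 2, c·k > r. Then ∑_{j=0}^{c−1} (−1)^j C((c−1−j)·k − 1, r − 1)·C(c−1, j) ≥ 0 and ∑_{i=0}^{c} (−1)^i C((c−i)·k − 1, r − 1)·C(c, i) > 0, where binomials with negative top are zero. -/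
/-!
With `n = m k - r`, the alternating sum `∑ᵢ (-1)ⁱ C(m, i) C((m - i) k - 1, r - 1)` is the
coefficient of `xⁿ` in `(1 - xᵏ)ᵐ / (1 - x)ʳ = (1 + x + ⋯ + xᵏ⁻¹)ᵐ / (1 - x)ʳ⁻ᵐ`. For `m < r`
both factors have nonnegative coefficients, the first has constant term `1` and the second has
all coefficients positive, so the sum is positive. If `m k < r` every binomial in the sum has
top below `r - 1` and the sum vanishes. The two sums of the theorem are the cases `m = c - 1`
and `m = c`.
-/

open Finset

open PowerSeries

lemma ichoose_eq_zero {t : ℤ} {m : ℕ} (h : t < m) : ichoose t m = 0 := by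
  unfold ichoose
  split_ifs
  · rfl
  · rw [Nat.choose_eq_zero_of_lt (by omega), Nat.cast_zero]

namespace PowerSeries

section NonnegCoeff

variable {R : Type*} [CommSemiring R] [PartialOrder R] [IsOrderedRing R] {f g : R⟦X⟧}

lemma coeff_mul_nonneg (hf : ∀ n, 0 ≤ coeff n f) (hg : ∀ n, 0 ≤ coeff n g) (n : ℕ) :
    0 ≤ coeff n (f * g) := by
  rw [coeff_mul]
  exact sum_nonneg fun p _ => mul_nonneg (hf p.1) (hg p.2)

lemma coeff_pow_nonneg (hf : ∀ n, 0 ≤ coeff n f) (m n : ℕ) : 0 ≤ coeff n (f ^ m) := by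
  induction m generalizing n with
  | zero => rw [pow_zero, coeff_one]; split_ifs <;> simp
  | succ m ih => rw [pow_succ]; exact coeff_mul_nonneg ih hf n

lemma coeff_mul_coeff_le_coeff_mul (hf : ∀ n, 0 ≤ coeff n f) (hg : ∀ n, 0 ≤ coeff n g)
    (a b : ℕ) : coeff a f * coeff b g ≤ coeff (a + b) (f * g) := by
  rw [coeff_mul]
  exact single_le_sum (f := fun p : ℕ × ℕ => coeff p.1 f * coeff p.2 g)
    (fun p _ => mul_nonneg (hf p.1) (hg p.2))
    (mem_antidiagonal.2 (rfl : (a, b).1 + (a, b).2 = _))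

lemma coeff_geom_sum_X_nonneg (k n : ℕ) :
    0 ≤ coeff n (∑ i ∈ range k, (X : R⟦X⟧) ^ i) := by
  rw [map_sum]
  exact sum_nonneg fun i _ => by rw [coeff_X_pow]; split_ifs <;> simp

end NonnegCoeff

lemma coeff_invOneSubPow_pos {S : Type*} [CommRing S] [PartialOrder S] [IsStrictOrderedRing S]
    {d : ℕ} (hd : 0 < d) (n : ℕ) : 0 < coeff n (invOneSubPow S d).val := by
  rw [invOneSubPow_val_eq_mk_sub_one_add_choose_of_pos S d hd, coeff_mk]
  exact Nat.cast_pos.2 (Nat.choose_pos (by omega))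

lemma coeff_X_pow_mul_invOneSubPow {r : ℕ} (hr : 0 < r) (n s : ℕ) :
    coeff n (X ^ s * (invOneSubPow ℤ r).val) = ichoose ((n : ℤ) - s + r - 1) (r - 1) := by
  rw [coeff_X_pow_mul', invOneSubPow_val_eq_mk_sub_one_add_choose_of_pos ℤ r hr, coeff_mk]
  split_ifs
  · unfold ichoose
    rw [if_neg (by omega)]
    congr 3
    omega
  · exact (ichoose_eq_zero (by omega)).symm

lemma constantCoeff_geom_sum_X {R : Type*} [CommRing R] {k : ℕ} (hk : 0 < k) :
    constantCoeff (∑ i ∈ range k, (X : R⟦X⟧) ^ i) = 1 := by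
  have h := congrArg constantCoeff (mul_neg_geom_sum (X : R⟦X⟧) k)
  simpa [zero_pow hk.ne'] using h

lemma one_sub_X_pow_pow_mul_invOneSubPow {S : Type*} [CommRing S] (k : ℕ) {m r : ℕ}
    (hmr : m ≤ r) :
    (1 - X ^ k) ^ m * (invOneSubPow S r).val
      = (∑ i ∈ range k, (X : S⟦X⟧) ^ i) ^ m * (invOneSubPow S (r - m)).val := by
  rw [← one_sub_pow_mul_invOneSubPow_val_add_eq_invOneSubPow_val S (r - m) m,
    Nat.sub_add_cancel hmr, ← mul_neg_geom_sum, mul_pow]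
  ring

lemma coeff_one_sub_X_pow_pow_mul_invOneSubPow {r : ℕ} (hr : 0 < r) (k m n : ℕ) :
    coeff n ((1 - X ^ k) ^ m * (invOneSubPow ℤ r).val)
      = ∑ i ∈ range (m + 1), (-1) ^ i * ichoose ((n : ℤ) - (k * i : ℕ) + r - 1) (r - 1)
          * m.choose i := by
  rw [← neg_add_eq_sub, add_pow, sum_mul, map_sum]
  refine sum_congr rfl fun i _ => ?_
  have hC : (-X ^ k) ^ i * 1 ^ (m - i) * (m.choose i : ℤ⟦X⟧)
      = C ((-1 : ℤ) ^ i * m.choose i) * X ^ (k * i) := by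
    rw [one_pow, mul_one, neg_pow, ← pow_mul, map_mul, map_pow, map_neg, map_one, map_natCast]
    ring
  rw [hC, mul_assoc, coeff_C_mul, coeff_X_pow_mul_invOneSubPow hr]
  ring

end PowerSeries

def altChooseSum (m k r : ℕ) : ℤ :=
  ∑ i ∈ range (m + 1), (-1) ^ i * ichoose (((m : ℤ) - i) * k - 1) (r - 1) * m.choose i

section altChooseSum

variable {m k r : ℕ}

lemma altChooseSum_eq_coeff (hr : 0 < r) (h : r ≤ m * k) :
    altChooseSum m k r = coeff (m * k - r) ((1 - X ^ k) ^ m * (invOneSubPow ℤ r).val) := by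
  rw [coeff_one_sub_X_pow_pow_mul_invOneSubPow hr, altChooseSum]
  refine sum_congr rfl fun i _ => ?_
  have harg : ((m : ℤ) - i) * k - 1 = ((m * k - r : ℕ) : ℤ) - (k * i : ℕ) + r - 1 := by
    push_cast [Nat.cast_sub h]
    ring
  rw [harg]

lemma altChooseSum_eq_zero (h : m * k < r) : altChooseSum m k r = 0 := by
  refine sum_eq_zero fun i _ => ?_
  have hlt : ((m : ℤ) - i) * k - 1 < ((r - 1 : ℕ) : ℤ) := by
    have hmk : ((m * k : ℕ) : ℤ) < r := by exact_mod_cast h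
    push_cast [Nat.cast_sub (by omega : 1 ≤ r)] at hmk ⊢
    nlinarith [(Nat.cast_nonneg (i * k) : (0 : ℤ) ≤ ((i * k : ℕ) : ℤ))]
  rw [ichoose_eq_zero hlt, mul_zero, zero_mul]

lemma altChooseSum_pos (hmr : m < r) (h : r ≤ m * k) : 0 < altChooseSum m k r := by
  have hk : 0 < k := Nat.pos_of_ne_zero fun hk => by simp [hk] at h; omega
  have hinv : ∀ n, 0 < coeff n (invOneSubPow ℤ (r - m)).val :=
    coeff_invOneSubPow_pos (by omega)
  rw [altChooseSum_eq_coeff (by omega) h, one_sub_X_pow_pow_mul_invOneSubPow k hmr.le,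
    ← zero_add (m * k - r)]
  have hG : coeff 0 ((∑ i ∈ range k, (X : ℤ⟦X⟧) ^ i) ^ m) = 1 := by
    rw [coeff_zero_eq_constantCoeff_apply, map_pow, constantCoeff_geom_sum_X hk, one_pow]
  refine lt_of_lt_of_le ?_ (coeff_mul_coeff_le_coeff_mul
    (coeff_pow_nonneg (coeff_geom_sum_X_nonneg k) m) (fun n => (hinv n).le) 0 _)
  rw [hG, one_mul]
  exact hinv _

lemma altChooseSum_nonneg (hmr : m < r) : 0 ≤ altChooseSum m k r := by
  rcases lt_or_ge (m * k) r with h | h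
  · exact (altChooseSum_eq_zero h).ge
  · exact (altChooseSum_pos hmr h).le

end altChooseSum

theorem stmt_11_general (r c k : ℕ) (hc2 : c ≤ r - 2) (hck : r < c * k) :
    0 ≤ ∑ j ∈ Finset.range c,
          (-1 : ℤ) ^ j * ichoose (((c : ℤ) - 1 - j) * k - 1) (r - 1)
            * (Nat.choose (c - 1) j : ℤ) ∧
    0 < ∑ i ∈ Finset.range (c + 1),
          (-1 : ℤ) ^ i * ichoose (((c : ℤ) - i) * k - 1) (r - 1)
            * (Nat.choose c i : ℤ) := by
  have hc : 1 ≤ c := Nat.pos_of_ne_zero fun hc => by simp [hc] at hck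
  refine ⟨?_, altChooseSum_pos (by omega) hck.le⟩
  have h := altChooseSum_nonneg (m := c - 1) (k := k) (r := r) (by omega)
  rwa [altChooseSum, Nat.sub_add_cancel hc, Nat.cast_sub hc, Nat.cast_one] at h

/-- The two alternating binomial sums appearing in the slope-inequality computation are
respectively nonnegative and strictly positive. -/
theorem stmt_11 (r c k : ℕ) (hc1 : 1 ≤ c) (hc2 : c ≤ r - 2) (hk : 2 ≤ k) (hck : r < c * k) :
    0 ≤ ∑ j ∈ Finset.range c,
          (-1 : ℤ) ^ j * ichoose (((c : ℤ) - 1 - j) * k - 1) (r - 1)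
            * (Nat.choose (c - 1) j : ℤ) ∧
    0 < ∑ i ∈ Finset.range (c + 1),
          (-1 : ℤ) ^ i * ichoose (((c : ℤ) - i) * k - 1) (r - 1)
            * (Nat.choose c i : ℤ) :=
  stmt_11_general r c k hc2 hck
end

section
/- Let r ≥ 2 and c ≥ 1 be integers, let k_1, ..., k_c be integers with k_i ≥ 2, let d be a real number, let y_1, ..., y_c be real numbers, and let h be an integer with 1 ≤ h < min_i k_i. Using the convention C(n, m) = 0 for n < m, the quantity h·(∏_i k_i·d − ∑_i (∏_{j≠i} k_j)·y_i)·∑_{I}(−1)^{|I|}C(h − k_I + r − 1, r − 1) − (r − c)·(∏_i k_i)·∑_{I}(−1)^{|I|}C(h − k_I + r − 1, r − 1)·((h − k_I)·d + y_I·r)/r equals (h/r)·C(h + r − 1, r − 1)·(c·∏_i k_i·d − ∑_i (∏_{j≠i} k_j)·y_i·r), since all terms with I ≠ ∅ vanish; in particular this quantity is nonnegative if and only if ∑_{i=1}^c y_i/k_i ≤ c·d/r. -/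
open Finset

lemma ichoose_zero (r : ℕ) (hr : 2 ≤ r) (n : ℤ) (hn : n ≤ r - 2) :
    ichoose n (r - 1) = 0 := by
  unfold ichoose
  split
  · rfl
  · next hneg =>
    push_neg at hneg
    norm_cast
    apply Nat.choose_eq_zero_of_lt
    omega

/-- Full numerical content of Theorem 3.5: for `h < min k_i`, the f-positivity quantity
of `O_X(h)` equals `(h/r)·C(h+r-1, r-1)·(c·∏k_i·d - ∑(∏_{j≠i}k_j)·y_i·r)`, and is
nonnegative iff `∑ y_i/k_i ≤ c·d/r`. -/
theorem stmt_14 (r c : ℕ) (hr : 2 ≤ r) (hc : 1 ≤ c)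
    (k : Fin c → ℤ) (hk : ∀ i, 2 ≤ k i) (d : ℝ) (y : Fin c → ℝ)
    (h : ℤ) (h1 : 1 ≤ h) (hmin : ∀ i, h < k i) :
    let Pk : ℝ := ∏ i, (k i : ℝ)
    let Sy : ℝ := ∑ i, (∏ j ∈ Finset.univ.erase i, (k j : ℝ)) * y i
    let S1 : ℝ := ∑ I ∈ (Finset.univ : Finset (Fin c)).powerset,
      (-1 : ℝ) ^ I.card * (ichoose (h - (∑ i ∈ I, k i) + r - 1) (r - 1) : ℝ)
    let S2 : ℝ := ∑ I ∈ (Finset.univ : Finset (Fin c)).powerset,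
      (-1 : ℝ) ^ I.card * (ichoose (h - (∑ i ∈ I, k i) + r - 1) (r - 1) : ℝ)
        * (((h : ℝ) - ∑ i ∈ I, (k i : ℝ)) * d + (∑ i ∈ I, y i) * (r : ℝ)) / (r : ℝ)
    let Q : ℝ := (h : ℝ) * (Pk * d - Sy) * S1 - ((r : ℝ) - (c : ℝ)) * Pk * S2
    Q = ((h : ℝ) / (r : ℝ)) * (ichoose (h + r - 1) (r - 1) : ℝ)
          * ((c : ℝ) * Pk * d - Sy * (r : ℝ)) ∧
    (Q ≥ 0 ↔ ∑ i, y i / (k i : ℝ) ≤ (c : ℝ) * d / (r : ℝ)) := by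
  intro Pk Sy S1 S2 Q
  have hr0 : (0:ℝ) < r := by positivity
  -- vanishing for nonempty I
  have hvan : ∀ I : Finset (Fin c), I ≠ ∅ →
      ichoose (h - (∑ i ∈ I, k i) + r - 1) (r - 1) = 0 := by
    intro I hI
    obtain ⟨i, hi⟩ := Finset.nonempty_iff_ne_empty.2 hI
    have hle : k i ≤ ∑ j ∈ I, k j :=
      Finset.single_le_sum (fun j _ => by linarith [hk j]) hi
    have := hmin i
    exact ichoose_zero r hr _ (by omega)
  have hS1 : S1 = (ichoose (h + r - 1) (r - 1) : ℝ) := by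
    show (∑ I ∈ (Finset.univ : Finset (Fin c)).powerset, _) = _
    rw [Finset.sum_eq_single_of_mem (∅ : Finset (Fin c))
      (Finset.empty_mem_powerset _)]
    · simp
    · intro I _ hI
      rw [hvan I hI]; simp
  have hS2 : S2 = (ichoose (h + r - 1) (r - 1) : ℝ) * ((h : ℝ) * d) / r := by
    show (∑ I ∈ (Finset.univ : Finset (Fin c)).powerset, _) = _
    rw [Finset.sum_eq_single_of_mem (∅ : Finset (Fin c))
      (Finset.empty_mem_powerset _)]
    · simp
    · intro I _ hI
      rw [hvan I hI]; simp
  set C : ℝ := (ichoose (h + r - 1) (r - 1) : ℝ) with hC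
  have hQ : Q = ((h : ℝ) / (r : ℝ)) * C * ((c : ℝ) * Pk * d - Sy * (r : ℝ)) := by
    show (h : ℝ) * (Pk * d - Sy) * S1 - ((r : ℝ) - (c : ℝ)) * Pk * S2 = _
    rw [hS1, hS2]
    field_simp
    ring
  refine ⟨hQ, ?_⟩
  have hCpos : 0 < C := by
    rw [hC]
    unfold ichoose
    rw [if_neg (by omega)]
    exact_mod_cast Nat.choose_pos (by omega : r - 1 ≤ (h + r - 1).toNat)
  have hh0 : (0:ℝ) < h := by exact_mod_cast h1
  have hr0' : (0:ℝ) < r := hr0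
  have hkpos : ∀ i, (0:ℝ) < (k i : ℝ) := fun i => by
    exact_mod_cast lt_of_lt_of_le two_pos (hk i)
  have hPk : 0 < Pk := Finset.prod_pos fun i _ => hkpos i
  have hSy : Sy = Pk * ∑ i, y i / (k i : ℝ) := by
    show (∑ i, (∏ j ∈ Finset.univ.erase i, (k j : ℝ)) * y i) = _
    rw [Finset.mul_sum]
    refine Finset.sum_congr rfl fun i _ => ?_
    have hp : (k i : ℝ) * ∏ j ∈ Finset.univ.erase i, (k j : ℝ)
        = ∏ j, (k j : ℝ) :=
      Finset.mul_prod_erase Finset.univ (fun j => ((k j : ℤ) : ℝ)) (Finset.mem_univ i)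
    rw [show Pk = ∏ j, (k j : ℝ) from rfl, ← hp]
    rw [mul_comm ((k i : ℝ)), mul_assoc]
    congr 1
    rw [← mul_div_assoc, mul_div_cancel_left₀ _ (hkpos i).ne']
  have hfac : 0 < (h : ℝ) / (r : ℝ) * C := by positivity
  have key : (0 ≤ (c:ℝ) * Pk * d - Sy * (r:ℝ)) ↔
      ∑ i, y i / (k i : ℝ) ≤ (c : ℝ) * d / (r : ℝ) := by
    rw [hSy, le_div_iff₀ hr0]
    constructor <;> intro hx <;> nlinarith [hPk]
  rw [hQ, ge_iff_le]
  rw [← key]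
  constructor
  · intro hx
    nlinarith
  · intro hx
    exact mul_nonneg hfac.le hx
end

section
/- Let r ≥ 2, c with 1 ≤ c ≤ r − 1, positive integers k_1, ..., k_c, and real numbers d, y_1, ..., y_c. Define β(h) := ∑_{I ⊆ {1,...,c}} (−1)^{|I|} C(h − k_I + r − 1, r − 1)·(k_I·d − y_I·r)/r for integers h ≥ 0 (binomials with negative top are zero), where k_I = ∑_{i∈I}k_i, y_I = ∑_{i∈I}y_i. Then lim_{h→∞} β(h)·(r−c)!/h^{r−c} = −(c·(∏_{i=1}^c k_i)·d − ∑_{i=1}^c (∏_{j≠i} k_j)·y_i·r)/r. -/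
open Finset Filter

/-!
For `h ≥ ∑ kᵢ` every binomial coefficient in `β(h)` has non-negative top, so it is the value of
the polynomial `binomialPoly (r - 1)` at a shifted argument. Collecting the terms containing a
fixed index `i` exhibits `β(h)` as `∑ᵢ -wᵢ · (∏_{j ≠ i} ∇_{k_j}) Bᵢ` evaluated at `h`, where
`wᵢ = (kᵢ d - yᵢ r) / r`, `Bᵢ` is a shift of `binomialPoly (r - 1)` and `∇ₐ q = q(X) - q(X - a)`.
Each `∇ₐ` lowers the degree by one and multiplies the leading coefficient by `a` times the old
degree, so `β` agrees for large `h` with a polynomial of degree `≤ r - c` whose coefficient of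
`h ^ (r - c)` is `-∑ᵢ wᵢ ∏_{j ≠ i} k_j / (r - c)!`.
-/

open Polynomial Topology Nat

theorem Finset.sum_powerset_filter_mem {ι M : Type*} [DecidableEq ι] [AddCommMonoid M]
    {s : Finset ι} {i : ι} (hi : i ∈ s) (g : Finset ι → M) :
    ∑ I ∈ s.powerset with i ∈ I, g I = ∑ J ∈ (s.erase i).powerset, g (insert i J) := by
  conv_lhs => rw [← insert_erase hi]
  rw [sum_filter, sum_powerset_insert (notMem_erase i s),
    sum_eq_zero fun J hJ => if_neg fun h => notMem_erase i s (mem_powerset.mp hJ h), zero_add]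
  exact sum_congr rfl fun J _ => if_pos (mem_insert_self i J)

theorem Finset.sum_powerset_sum_mul {ι R : Type*} [DecidableEq ι] [NonUnitalNonAssocSemiring R]
    (s : Finset ι) (w : ι → R) (f : Finset ι → R) :
    ∑ I ∈ s.powerset, (∑ i ∈ I, w i) * f I =
      ∑ i ∈ s, w i * ∑ J ∈ (s.erase i).powerset, f (insert i J) := by
  simp_rw [sum_mul, mul_sum]
  rw [sum_comm' (t' := s) (s' := fun i => {I ∈ s.powerset | i ∈ I})]
  · exact sum_congr rfl fun i hi => sum_powerset_filter_mem hi _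
  · intro I i
    simp only [mem_powerset, mem_filter]
    exact ⟨fun h => ⟨h, h.1 h.2⟩, fun h => h.1⟩

namespace Polynomial

section BackwardDiff

variable {R : Type*} [CommRing R]

theorem natDegree_sub_taylor_neg_le {q : R[X]} {D : ℕ} (hq : q.natDegree ≤ D + 1) (a : R) :
    (q - taylor (-a) q).natDegree ≤ D := by
  refine natDegree_le_iff_coeff_eq_zero.mpr fun n hn => ?_
  have hconst : (hasseDeriv n q).natDegree ≤ 0 :=
    (natDegree_hasseDeriv_le q n).trans (by omega)
  rw [coeff_sub, taylor_coeff, eq_C_of_natDegree_le_zero hconst, eval_C, hasseDeriv_coeff]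
  simp

theorem coeff_sub_taylor_neg {q : R[X]} {D : ℕ} (hq : q.natDegree ≤ D + 1) (a : R) :
    (q - taylor (-a) q).coeff D = (D + 1) * a * q.coeff (D + 1) := by
  have hlin : (hasseDeriv D q).natDegree ≤ 1 :=
    (natDegree_hasseDeriv_le q D).trans (by omega)
  rw [coeff_sub, taylor_coeff, eq_X_add_C_of_natDegree_le_one hlin]
  simp only [eval_add, eval_mul, eval_C, eval_X, hasseDeriv_coeff, zero_add, add_comm 1 D,
    Nat.choose_succ_self_right, Nat.choose_self]
  push_cast
  ring

variable {ι : Type*} [DecidableEq ι]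

/-- `(∏_{j ∈ s} ∇_{a j}) q`, where `∇_a q = q(X) - q(X - a)`, expanded over the subsets of `s`. -/
noncomputable def iteratedBackwardDiff (s : Finset ι) (a : ι → R) (q : R[X]) : R[X] :=
  ∑ J ∈ s.powerset, (-1 : R) ^ J.card • taylor (-∑ j ∈ J, a j) q

theorem iteratedBackwardDiff_insert {s : Finset ι} {i : ι} (hi : i ∉ s) (a : ι → R) (q : R[X]) :
    iteratedBackwardDiff (insert i s) a q =
      iteratedBackwardDiff s a q - taylor (-a i) (iteratedBackwardDiff s a q) := by
  rw [iteratedBackwardDiff, sum_powerset_insert hi, iteratedBackwardDiff, map_sum, sub_eq_add_neg,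
    ← sum_neg_distrib]
  congr 1
  refine sum_congr rfl fun J hJ => ?_
  have hiJ : i ∉ J := fun h => hi (mem_powerset.mp hJ h)
  rw [card_insert_of_notMem hiJ, sum_insert hiJ, map_smul, taylor_taylor, pow_succ, mul_neg_one,
    neg_smul, neg_add]

theorem natDegree_iteratedBackwardDiff_le (s : Finset ι) (a : ι → R) {q : R[X]} {D : ℕ}
    (hq : q.natDegree ≤ D + s.card) : (iteratedBackwardDiff s a q).natDegree ≤ D := by
  induction s using Finset.induction_on generalizing D with
  | empty => simpa [iteratedBackwardDiff] using hq
  | insert i s hi ih =>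
    rw [iteratedBackwardDiff_insert hi]
    exact natDegree_sub_taylor_neg_le (ih (by rw [card_insert_of_notMem hi] at hq; omega)) _

theorem coeff_iteratedBackwardDiff_mul_factorial (s : Finset ι) (a : ι → R) {q : R[X]} {D : ℕ}
    (hq : q.natDegree ≤ D + s.card) :
    (iteratedBackwardDiff s a q).coeff D * D ! =
      (∏ j ∈ s, a j) * (D + s.card)! * q.coeff (D + s.card) := by
  induction s using Finset.induction_on generalizing D with
  | empty => simp [iteratedBackwardDiff, mul_comm]
  | insert i s hi ih =>
    rw [card_insert_of_notMem hi] at hq ⊢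
    have hq' : q.natDegree ≤ D + 1 + s.card := by omega
    have h := ih hq'
    rw [factorial_succ] at h
    push_cast at h
    rw [iteratedBackwardDiff_insert hi,
      coeff_sub_taylor_neg (natDegree_iteratedBackwardDiff_le s a hq'), prod_insert hi,
      show D + (s.card + 1) = D + 1 + s.card by omega]
    linear_combination a i * h

end BackwardDiff

theorem tendsto_eval_div_pow_atTop {P : ℝ[X]} {D : ℕ} (hP : P.natDegree ≤ D) :
    Tendsto (fun x : ℝ => P.eval x / x ^ D) atTop (𝓝 (P.coeff D)) := by
  have hX : ((X : ℝ[X]) ^ D).degree = D := degree_X_pow D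
  simp_rw [← eval_X_pow (R := ℝ) (n := D)]
  rcases (degree_le_of_natDegree_le hP).lt_or_eq with hlt | heq
  · rw [coeff_eq_zero_of_degree_lt hlt]
    exact div_tendsto_atTop_zero_of_degree_lt P _ (hX ▸ hlt)
  · convert div_tendsto_atTop_leadingCoeff_div_of_degree_eq P _ (heq.trans hX.symm) using 2
    simp [leadingCoeff, natDegree_eq_of_degree_eq_some heq]

end Polynomial

noncomputable def binomialPoly (n : ℕ) : ℝ[X] := C (n ! : ℝ)⁻¹ * descPochhammer ℝ n

theorem natDegree_binomialPoly (n : ℕ) : (binomialPoly n).natDegree = n := by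
  rw [binomialPoly, natDegree_C_mul (by positivity), descPochhammer_natDegree]

theorem leadingCoeff_binomialPoly (n : ℕ) : (binomialPoly n).leadingCoeff = (n ! : ℝ)⁻¹ := by
  rw [binomialPoly, leadingCoeff_C_mul_of_isUnit (by simp; positivity),
    (monic_descPochhammer ℝ n).leadingCoeff, mul_one]

theorem coeff_taylor_binomialPoly (n : ℕ) (t : ℝ) :
    (taylor t (binomialPoly n)).coeff n = (n ! : ℝ)⁻¹ := by
  simpa [natDegree_binomialPoly, leadingCoeff_binomialPoly] using
    coeff_taylor_natDegree (f := binomialPoly n) (r := t)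

theorem ichoose_eq_eval_binomialPoly {m : ℤ} (hm : 0 ≤ m) (n : ℕ) :
    (ichoose m n : ℝ) = (binomialPoly n).eval (m : ℝ) := by
  lift m to ℕ using hm
  rw [ichoose, if_neg (by omega), binomialPoly, eval_mul, eval_C]
  simp only [Int.cast_natCast, Int.toNat_natCast]
  rw [descPochhammer_eval_eq_descFactorial, descFactorial_eq_factorial_mul_choose]
  push_cast
  field_simp

theorem sum_powerset_ichoose_eq_eval {ι : Type*} [DecidableEq ι] (s : Finset ι) (a : ι → ℕ)
    (n : ℕ) {t h : ℤ} (hh : ∑ j ∈ s, (a j : ℤ) ≤ h + t) :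
    ∑ J ∈ s.powerset, (-1 : ℝ) ^ J.card * (ichoose (h + t - ∑ j ∈ J, (a j : ℤ)) n : ℝ) =
      (iteratedBackwardDiff s (fun j => (a j : ℝ)) (taylor (t : ℝ) (binomialPoly n))).eval
        (h : ℝ) := by
  rw [iteratedBackwardDiff, eval_finsetSum]
  refine sum_congr rfl fun J hJ => ?_
  have hJs : ∑ j ∈ J, (a j : ℤ) ≤ ∑ j ∈ s, (a j : ℤ) :=
    sum_le_sum_of_subset_of_nonneg (mem_powerset.mp hJ) fun _ _ _ => by positivity
  rw [ichoose_eq_eval_binomialPoly (by omega), eval_smul, taylor_taylor, taylor_eval, smul_eq_mul]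
  push_cast
  ring_nf

section Beta

variable {ι : Type*} [Fintype ι] [DecidableEq ι]

/-- The paper's `β` as a polynomial in `h`, for `n = r - 1`, `w i = (k i d - y i r) / r`. -/
noncomputable def betaPoly (k : ι → ℕ) (w : ι → ℝ) (n : ℕ) : ℝ[X] :=
  ∑ i, C (-w i) * iteratedBackwardDiff (univ.erase i) (fun j => (k j : ℝ))
    (taylor ((n : ℝ) - k i) (binomialPoly n))

theorem eval_betaPoly (k : ι → ℕ) (w : ι → ℝ) (n : ℕ) {h : ℤ} (hh : ∑ i, (k i : ℤ) ≤ h + n) :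
    ∑ I ∈ (univ : Finset ι).powerset,
        (-1 : ℝ) ^ I.card * (ichoose (h - ∑ i ∈ I, (k i : ℤ) + n) n : ℝ) * ∑ i ∈ I, w i =
      (betaPoly k w n).eval (h : ℝ) := by
  simp_rw [mul_comm _ (∑ i ∈ _, w i)]
  rw [sum_powerset_sum_mul, betaPoly, eval_finsetSum]
  refine sum_congr rfl fun i _ => ?_
  have hsplit := add_sum_erase univ (fun j => (k j : ℤ)) (mem_univ i)
  have hsum := sum_powerset_ichoose_eq_eval (univ.erase i) k n (t := n - k i) (h := h) (by omega)
  push_cast at hsum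
  rw [eval_mul, eval_C, ← hsum, mul_sum, mul_sum]
  refine sum_congr rfl fun J hJ => ?_
  have hiJ : i ∉ J := fun hi => notMem_erase i univ (mem_powerset.mp hJ hi)
  rw [card_insert_of_notMem hiJ, sum_insert hiJ, pow_succ]
  ring_nf

theorem add_card_univ_erase {n D : ℕ} (hD : D + Fintype.card ι = n + 1) (i : ι) :
    D + (univ.erase i).card = n := by
  have := Fintype.card_pos_iff.mpr ⟨i⟩
  rw [card_erase_of_mem (mem_univ i), Finset.card_univ]
  omega

theorem natDegree_betaPoly_le (k : ι → ℕ) (w : ι → ℝ) {n D : ℕ}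
    (hD : D + Fintype.card ι = n + 1) : (betaPoly k w n).natDegree ≤ D := by
  refine natDegree_sum_le_of_forall_le _ _ fun i _ => (natDegree_C_mul_le _ _).trans ?_
  exact natDegree_iteratedBackwardDiff_le _ _
    (by rw [natDegree_taylor, natDegree_binomialPoly, add_card_univ_erase hD i])

theorem coeff_betaPoly_mul_factorial (k : ι → ℕ) (w : ι → ℝ) {n D : ℕ}
    (hD : D + Fintype.card ι = n + 1) :
    (betaPoly k w n).coeff D * D ! = -∑ i, w i * ∏ j ∈ univ.erase i, (k j : ℝ) := by
  rw [betaPoly, finsetSum_coeff, sum_mul, ← sum_neg_distrib]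
  refine sum_congr rfl fun i _ => ?_
  have hcard := add_card_univ_erase hD i
  rw [coeff_C_mul, mul_assoc, coeff_iteratedBackwardDiff_mul_factorial _ _
    (by rw [natDegree_taylor, natDegree_binomialPoly, hcard]), hcard, coeff_taylor_binomialPoly,
    mul_assoc, mul_inv_cancel₀ (by positivity), mul_one, neg_mul]

end Beta

theorem stmt_15_general (r c : ℕ) (hc1 : 1 ≤ c) (hc2 : c ≤ r - 1)
    (k : Fin c → ℕ) (d : ℝ) (y : Fin c → ℝ) :
    Tendsto
      (fun h : ℕ =>
        (∑ I ∈ (Finset.univ : Finset (Fin c)).powerset,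
            (-1 : ℝ) ^ I.card
              * (ichoose ((h : ℤ) - (∑ i ∈ I, (k i : ℤ)) + r - 1) (r - 1) : ℝ)
              * ((∑ i ∈ I, (k i : ℝ)) * d - (∑ i ∈ I, y i) * (r : ℝ)) / (r : ℝ))
          * (Nat.factorial (r - c) : ℝ) / (h : ℝ) ^ (r - c))
      atTop
      (nhds (-(((c : ℝ) * (∏ i, (k i : ℝ)) * d
          - (∑ i, (∏ j ∈ Finset.univ.erase i, (k j : ℝ)) * y i) * (r : ℝ)) / (r : ℝ)))) := by
  set w : Fin c → ℝ := fun i => (k i * d - y i * r) / r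
  have hD : r - c + Fintype.card (Fin c) = r - 1 + 1 := by
    rw [Fintype.card_fin]
    omega
  have hlim := (((tendsto_eval_div_pow_atTop (natDegree_betaPoly_le k w hD)).comp
    tendsto_natCast_atTop_atTop).mul_const ((r - c)! : ℝ))
  rw [coeff_betaPoly_mul_factorial k w hD] at hlim
  have hprod : (c : ℝ) * ∏ i, (k i : ℝ) = ∑ i, (k i : ℝ) * ∏ j ∈ univ.erase i, (k j : ℝ) := by
    simp [mul_prod_erase univ (fun j => (k j : ℝ)) (mem_univ _)]
  convert hlim.congr' ?_ using 2
  · rw [hprod, sum_mul, sum_mul, ← sum_sub_distrib, sum_div]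
    exact congrArg Neg.neg (sum_congr rfl fun i _ => by ring)
  filter_upwards [eventually_ge_atTop (∑ j, k j)] with h hh
  have hr : ((r - 1 : ℕ) : ℤ) = r - 1 := by omega
  have hh' : ∑ j, (k j : ℤ) ≤ h := by exact_mod_cast hh
  have hterm (I : Finset (Fin c)) :
      ((∑ i ∈ I, (k i : ℝ)) * d - (∑ i ∈ I, y i) * r) / r = ∑ i ∈ I, w i := by
    simp only [w, ← sum_div, sum_sub_distrib, sum_mul]
  simp only [Function.comp_apply, mul_div_assoc, hterm, add_sub_assoc, ← hr]
  rw [← Int.cast_natCast h, ← eval_betaPoly k w (r - 1) (by omega)]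
  ring

/-- Asymptotic Lemma 3.10: the correction term `β(h)` in `deg f_* O_X(h)` has leading
asymptotic coefficient `-α/r` with `α = c·∏k_i·d - ∑(∏_{j≠i}k_j)·y_i·r`. -/
theorem stmt_15 (r c : ℕ) (hr : 2 ≤ r) (hc1 : 1 ≤ c) (hc2 : c ≤ r - 1)
    (k : Fin c → ℕ) (hk : ∀ i, 0 < k i) (d : ℝ) (y : Fin c → ℝ) :
    Tendsto
      (fun h : ℕ =>
        (∑ I ∈ (Finset.univ : Finset (Fin c)).powerset,
            (-1 : ℝ) ^ I.card
              * (ichoose ((h : ℤ) - (∑ i ∈ I, (k i : ℤ)) + r - 1) (r - 1) : ℝ)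
              * ((∑ i ∈ I, (k i : ℝ)) * d - (∑ i ∈ I, y i) * (r : ℝ)) / (r : ℝ))
          * (Nat.factorial (r - c) : ℝ) / (h : ℝ) ^ (r - c))
      atTop
      (nhds (-(((c : ℝ) * (∏ i, (k i : ℝ)) * d
          - (∑ i, (∏ j ∈ Finset.univ.erase i, (k j : ℝ)) * y i) * (r : ℝ)) / (r : ℝ)))) :=
  stmt_15_general r c hc1 hc2 k d y
end
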